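/- Let $K : (\mathbb{R}^n)^{m} \setminus \{ \vec y : \text{all } y_j = x \} \to [0, \infty)$ satisfy $K(\vec y) \le A \left( \sum_{j=1}^m |x - y_j| \right)^{-mn}$ for a fixed $x \in \mathbb{R}^n$ and $A > 0$. Let $\delta > 0$ and suppose $f_1, \dots, f_m$ are locally integrable on $\mathbb{R}^n$. Then $\int_{\{\vec y : \sum_j |x - y_j|^2 \ge \delta^2,\ \min_j |x - y_j| < \delta \}} K(\vec y) \prod_{j=1}^m |f_j(y_j)| \, d\vec y \le C A \prod_{j=1}^m M f_j(x)$, where $M$ is the Hardy–Littlewood maximal operator and $C$ depends only on $n$ and $m$. -/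

import Mathlib

open MeasureTheory ENNReal

/-- The (centered) Hardy–Littlewood maximal operator on `ℝⁿ`. -/
noncomputable def hlMaximal {n : ℕ} (f : EuclideanSpace ℝ (Fin n) → ℝ)
    (x : EuclideanSpace ℝ (Fin n)) : ℝ≥0∞ :=
  ⨆ (r : ℝ) (_ : 0 < r),
    (volume (Metric.ball x r))⁻¹ * ∫⁻ y in Metric.ball x r, (‖f y‖₊ : ℝ≥0∞)

/-!
Cut the region into the dyadic pieces on which `2^k δ ≤ ∑ |x - y_j| < 2^(k+1) δ` and a chosen
coordinate `y_i` lies in `B(x, δ)`; since `∑ |x - y_j|² ≥ δ²` forces `∑ |x - y_j| ≥ δ`, the pieces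
with `k ≥ 0` cover it. On such a piece the kernel is at most `A (2^k δ)^(-mn)`, and the piece lies
in the product of `B(x, δ)` in slot `i` with balls of radius `2^(k+1) δ` in the other slots, so
Fubini and the definition of `M` bound its contribution by
`A 2^(mn) 2^(-n(k+1)) |B(0,1)|^m ∏ M f_j(x)`. The factor `2^(-nk)`, which comes from the small
ball in slot `i`, makes the sum over `k` geometric.
-/

theorem Fintype.prod_update_mul_apply {ι M : Type*} [Fintype ι] [DecidableEq ι] [CommMonoid M]
    (f : ι → M) (i : ι) (b : M) : (∏ j, Function.update f i b j) * f i = b * ∏ j, f j := by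
  rw [Finset.prod_update_of_mem (Finset.mem_univ i), mul_assoc,
    ← Finset.prod_singleton f i, Finset.prod_sdiff (Finset.subset_univ _)]

theorem tsum_ofReal_mul_inv_pow_succ_prod_fin (m : ℕ) {a r : ℝ} (ha : 0 ≤ a) (hr : 1 < r) :
    ∑' p : ℕ × Fin m, ENNReal.ofReal (a * r⁻¹ ^ (p.1 + 1)) = ENNReal.ofReal (m * a / (r - 1)) := by
  have hq₀ : 0 ≤ r⁻¹ := by positivity
  have hq₁ : r⁻¹ < 1 := inv_lt_one_of_one_lt₀ hr
  rw [ENNReal.tsum_prod (f := fun k (_ : Fin m) ↦ ENNReal.ofReal (a * r⁻¹ ^ (k + 1)))]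
  simp only [tsum_fintype, Finset.sum_const, Finset.card_univ, Fintype.card_fin, nsmul_eq_mul]
  rw [ENNReal.tsum_mul_left, ← ENNReal.ofReal_tsum_of_nonneg (fun k ↦ by positivity)
    ((summable_geometric_of_lt_one hq₀ hq₁).mul_left (a * r⁻¹) |>.congr fun k ↦ by ring),
    ← ENNReal.ofReal_natCast, ← ENNReal.ofReal_mul (by positivity)]
  congr 1
  simp only [pow_succ, ← mul_assoc, tsum_mul_right, tsum_mul_left, tsum_geometric_of_lt_one hq₀ hq₁]
  field_simp

theorem lintegral_fin_pi_prod_eq_prod {α : Type*} [MeasurableSpace α] {m : ℕ}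
    {μ : Fin m → Measure α} [∀ i, SigmaFinite (μ i)]
    (g : Fin m → α → ℝ≥0∞) (hg : ∀ i, AEMeasurable (g i) (μ i)) :
    ∫⁻ y, ∏ i, g i (y i) ∂Measure.pi μ = ∏ i, ∫⁻ t, g i t ∂μ i := by
  induction m with
  | zero => simp
  | succ m ih =>
    calc ∫⁻ y, ∏ i, g i (y i) ∂Measure.pi μ
        = ∫⁻ p : α × (Fin m → α), g 0 p.1 * ∏ i : Fin m, g i.succ (p.2 i)
            ∂(μ 0).prod (Measure.pi fun i ↦ μ i.succ) := by
          rw [← ((measurePreserving_piFinSuccAbove μ 0).symm).lintegral_comp_emb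
            (MeasurableEquiv.measurableEmbedding _)]
          simp [MeasurableEquiv.piFinSuccAbove_symm_apply, Fin.prod_univ_succ]
      _ = (∫⁻ t, g 0 t ∂μ 0) * ∏ i : Fin m, ∫⁻ t, g i.succ t ∂μ i.succ := by
          rw [← ih (fun i : Fin m ↦ g i.succ) fun i ↦ hg i.succ]
          exact lintegral_prod_mul (hg 0) <| Finset.aemeasurable_fun_prod _ fun (i : Fin m) _ ↦
            (hg i.succ).comp_quasiMeasurePreserving (Measure.quasiMeasurePreserving_eval _ i)
      _ = ∏ i, ∫⁻ t, g i t ∂μ i := (Fin.prod_univ_succ fun i ↦ ∫⁻ t, g i t ∂μ i).symm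

theorem setLIntegral_univ_pi_prod_eq_prod {α : Type*} [MeasurableSpace α] {m : ℕ}
    {μ : Fin m → Measure α} [∀ i, SigmaFinite (μ i)]
    (g : Fin m → α → ℝ≥0∞) (hg : ∀ i, AEMeasurable (g i) (μ i)) (s : Fin m → Set α) :
    ∫⁻ y in Set.univ.pi s, ∏ i, g i (y i) ∂Measure.pi μ = ∏ i, ∫⁻ t in s i, g i t ∂μ i := by
  rw [Measure.restrict_pi_pi]
  exact lintegral_fin_pi_prod_eq_prod g fun i ↦ (hg i).restrict

section DyadicPiece

variable {E : Type*} [SeminormedAddCommGroup E] {m : ℕ}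

def dyadicPiece (x : E) (δ : ℝ) (k : ℕ) (i : Fin m) : Set (Fin m → E) :=
  {y | 2 ^ k * δ ≤ ∑ j, ‖x - y j‖ ∧ ∑ j, ‖x - y j‖ < 2 ^ (k + 1) * δ ∧ ‖x - y i‖ < δ}

def dyadicRadius (δ : ℝ) (k : ℕ) (i : Fin m) : Fin m → ℝ :=
  Function.update (fun _ ↦ 2 ^ (k + 1) * δ) i δ

theorem dyadicRadius_pos {δ : ℝ} (hδ : 0 < δ) (k : ℕ) (i j : Fin m) : 0 < dyadicRadius δ k i j := by
  rcases eq_or_ne j i with rfl | hj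
  · simpa [dyadicRadius] using hδ
  · simp only [dyadicRadius, Function.update_of_ne hj]
    positivity

theorem rpow_neg_mul_prod_dyadicRadius_pow {n k : ℕ} {δ : ℝ} (hδ : 0 < δ) (i : Fin m) :
    (2 ^ k * δ) ^ (-(m * n : ℝ)) * (∏ j, dyadicRadius δ k i j) ^ n
      = 2 ^ (m * n) * ((2 ^ n)⁻¹) ^ (k + 1) := by
  have hprod := Fintype.prod_update_mul_apply (fun _ : Fin m ↦ (2 : ℝ) ^ (k + 1) * δ) i δ
  simp only [Finset.prod_const, Finset.card_univ, Fintype.card_fin] at hprod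
  rw [dyadicRadius, eq_div_of_mul_eq (by positivity) hprod,
    show (m * n : ℝ) = ((m * n : ℕ) : ℝ) by push_cast; ring,
    Real.rpow_neg (by positivity), Real.rpow_natCast]
  field_simp
  ring_nf
  norm_num

theorem subset_iUnion_dyadicPiece (x : E) {δ : ℝ} (hδ : 0 < δ) :
    {y : Fin m → E | δ ^ 2 ≤ ∑ j, ‖x - y j‖ ^ 2 ∧ ∃ j, ‖x - y j‖ < δ}
      ⊆ ⋃ p : ℕ × Fin m, dyadicPiece x δ p.1 p.2 := by
  rintro y ⟨hsq, i, hi⟩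
  have hsum : δ ≤ ∑ j, ‖x - y j‖ := by
    refine abs_le_of_sq_le_sq' ?_ (by positivity) |>.2
    exact hsq.trans (Finset.sum_sq_le_sq_sum_of_nonneg fun j _ ↦ norm_nonneg _)
  obtain ⟨k, hk, hk'⟩ := exists_nat_pow_near ((one_le_div hδ).2 hsum) one_lt_two
  rw [le_div_iff₀ hδ] at hk
  rw [div_lt_iff₀ hδ] at hk'
  exact Set.mem_iUnion.2 ⟨(k, i), hk, hk', hi⟩

theorem dyadicPiece_subset_univ_pi_ball (x : E) (δ : ℝ) (k : ℕ) (i : Fin m) :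
    dyadicPiece x δ k i ⊆ Set.univ.pi fun j ↦ Metric.ball x (dyadicRadius δ k i j) := by
  rintro y ⟨-, hlt, hi⟩ j -
  rw [Metric.mem_ball, dist_comm, dist_eq_norm]
  rcases eq_or_ne j i with rfl | hj
  · simpa [dyadicRadius] using hi
  · rw [dyadicRadius, Function.update_of_ne hj]
    exact (Finset.single_le_sum (fun j _ ↦ norm_nonneg (x - y j)) (Finset.mem_univ j)).trans_lt hlt

theorem le_of_mem_dyadicPiece_of_le_rpow_neg {x : E} {δ A s : ℝ} (hδ : 0 < δ) (hA : 0 ≤ A)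
    (hs : 0 ≤ s) {K : (Fin m → E) → ℝ}
    (hK : ∀ y : Fin m → E, (¬ ∀ j, y j = x) → K y ≤ A * (∑ j, ‖x - y j‖) ^ (-s))
    {k : ℕ} {i : Fin m} {y : Fin m → E} (hy : y ∈ dyadicPiece x δ k i) :
    K y ≤ A * (2 ^ k * δ) ^ (-s) := by
  have hpos : 0 < 2 ^ k * δ := by positivity
  have hne : ¬ ∀ j, y j = x := fun h ↦ by
    have : ∑ j, ‖x - y j‖ = 0 := by simp [h]
    linarith [hy.1]
  exact (hK y hne).trans <| mul_le_mul_of_nonneg_left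
    (Real.rpow_le_rpow_of_nonpos hpos hy.1 (neg_nonpos.2 hs)) hA

end DyadicPiece

section Euclidean

variable {n m : ℕ}

local notation "E" => EuclideanSpace ℝ (Fin n)

theorem measurableSet_dyadicPiece (x : E) (δ : ℝ) (k : ℕ) (i : Fin m) :
    MeasurableSet (dyadicPiece x δ k i) := by
  unfold dyadicPiece
  measurability

theorem setLIntegral_ball_le_volume_mul_hlMaximal (f : E → ℝ) (x : E) {r : ℝ} (hr : 0 < r) :
    ∫⁻ t in Metric.ball x r, (‖f t‖₊ : ℝ≥0∞) ≤ volume (Metric.ball x r) * hlMaximal f x := by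
  rw [← ENNReal.inv_mul_le_iff (Metric.measure_ball_pos volume x hr).ne' measure_ball_lt_top.ne]
  exact le_iSup₂ (f := fun (r : ℝ) (_ : 0 < r) ↦
    (volume (Metric.ball x r))⁻¹ * ∫⁻ t in Metric.ball x r, (‖f t‖₊ : ℝ≥0∞)) r hr

theorem setLIntegral_univ_pi_ball_le (f : Fin m → E → ℝ)
    (hf : ∀ j, AEStronglyMeasurable (f j)) (x : E) {r : Fin m → ℝ} (hr : ∀ j, 0 < r j) :
    ∫⁻ y in Set.univ.pi fun j ↦ Metric.ball x (r j), ∏ j, (‖f j (y j)‖₊ : ℝ≥0∞)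
      ≤ (∏ j, volume (Metric.ball x (r j))) * ∏ j, hlMaximal (f j) x := by
  rw [volume_pi, setLIntegral_univ_pi_prod_eq_prod (fun j t ↦ (‖f j t‖₊ : ℝ≥0∞))
    fun j ↦ (hf j).enorm, ← Finset.prod_mul_distrib]
  exact Finset.prod_le_prod' fun j _ ↦ setLIntegral_ball_le_volume_mul_hlMaximal (f j) x (hr j)

theorem prod_volume_ball [NeZero n] (x : E) {r : Fin m → ℝ} (hr : ∀ j, 0 ≤ r j) :
    ∏ j, volume (Metric.ball x (r j))
      = ENNReal.ofReal ((∏ j, r j) ^ n) * volume (Metric.ball (0 : E) 1) ^ m := by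
  simp only [Measure.addHaar_ball volume x (hr _), finrank_euclideanSpace_fin,
    Finset.prod_mul_distrib, Finset.prod_const, Finset.card_univ, Fintype.card_fin,
    ← Finset.prod_pow]
  rw [ENNReal.ofReal_prod_of_nonneg fun j _ ↦ pow_nonneg (hr j) n]

theorem setLIntegral_dyadicPiece_le [NeZero n] {x : E} {δ A : ℝ} (hδ : 0 < δ) (hA : 0 ≤ A)
    {K : (Fin m → E) → ℝ}
    (hK : ∀ y : Fin m → E, (¬ ∀ j, y j = x) → K y ≤ A * (∑ j, ‖x - y j‖) ^ (-(m * n : ℝ)))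
    (f : Fin m → E → ℝ) (hf : ∀ j, AEStronglyMeasurable (f j)) (k : ℕ) (i : Fin m) :
    ∫⁻ y in dyadicPiece x δ k i, ENNReal.ofReal (K y) * ∏ j, (‖f j (y j)‖₊ : ℝ≥0∞)
      ≤ ENNReal.ofReal (A * 2 ^ (m * n) * ((2 ^ n)⁻¹) ^ (k + 1))
        * volume (Metric.ball (0 : E) 1) ^ m * ∏ j, hlMaximal (f j) x := by
  calc ∫⁻ y in dyadicPiece x δ k i, ENNReal.ofReal (K y) * ∏ j, (‖f j (y j)‖₊ : ℝ≥0∞)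
      ≤ ∫⁻ y in dyadicPiece x δ k i,
          ENNReal.ofReal (A * (2 ^ k * δ) ^ (-(m * n : ℝ))) * ∏ j, (‖f j (y j)‖₊ : ℝ≥0∞) :=
        setLIntegral_mono' (measurableSet_dyadicPiece x δ k i) fun y hy ↦
          mul_le_mul_left (ENNReal.ofReal_le_ofReal
            (le_of_mem_dyadicPiece_of_le_rpow_neg hδ hA (by positivity) hK hy)) _
    _ = ENNReal.ofReal (A * (2 ^ k * δ) ^ (-(m * n : ℝ)))
          * ∫⁻ y in dyadicPiece x δ k i, ∏ j, (‖f j (y j)‖₊ : ℝ≥0∞) :=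
        lintegral_const_mul' _ _ ENNReal.ofReal_ne_top
    _ ≤ ENNReal.ofReal (A * (2 ^ k * δ) ^ (-(m * n : ℝ)))
          * ((∏ j, volume (Metric.ball x (dyadicRadius δ k i j))) * ∏ j, hlMaximal (f j) x) :=
        mul_le_mul_right ((lintegral_mono_set (dyadicPiece_subset_univ_pi_ball x δ k i)).trans
          (setLIntegral_univ_pi_ball_le f hf x (dyadicRadius_pos hδ k i))) _
    _ = _ := by
        rw [prod_volume_ball x fun j ↦ (dyadicRadius_pos hδ k i j).le, ← mul_assoc, ← mul_assoc,
          ← ENNReal.ofReal_mul (by positivity), mul_assoc A,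
          rpow_neg_mul_prod_dyadicRadius_pow hδ, mul_assoc A]

end Euclidean

/-- pointwise estimate for the kernel integral over the truncation-error
region `(U_δ(x) ∪ V_δ(x))ᶜ`. -/
theorem stmt_10 (n m : ℕ) (hn : 0 < n) (hm : 1 ≤ m) :
    ∃ C : ℝ, 0 < C ∧
      ∀ (x : EuclideanSpace ℝ (Fin n)) (A δ : ℝ), 0 < A → 0 < δ →
      ∀ (K : (Fin m → EuclideanSpace ℝ (Fin n)) → ℝ),
        (∀ y, 0 ≤ K y) →
        (∀ y : Fin m → EuclideanSpace ℝ (Fin n), (¬ ∀ j, y j = x) →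
          K y ≤ A * (∑ j, ‖x - y j‖) ^ (-(m * n : ℝ))) →
      ∀ f : Fin m → EuclideanSpace ℝ (Fin n) → ℝ,
        (∀ j, LocallyIntegrable (f j) volume) →
        (∫⁻ y in {y : Fin m → EuclideanSpace ℝ (Fin n) |
            δ ^ 2 ≤ ∑ j, ‖x - y j‖ ^ 2 ∧ ∃ j, ‖x - y j‖ < δ},
          ENNReal.ofReal (K y) * ∏ j, (‖f j (y j)‖₊ : ℝ≥0∞)) ≤
        ENNReal.ofReal (C * A) * ∏ j, hlMaximal (f j) x := by
  have : NeZero n := ⟨hn.ne'⟩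
  set B := volume (Metric.ball (0 : EuclideanSpace ℝ (Fin n)) 1)
  have hB : B ≠ ∞ := measure_ball_lt_top.ne
  have h2n : (1 : ℝ) < 2 ^ n := one_lt_pow₀ (by norm_num) hn.ne'
  refine ⟨m * 2 ^ (m * n) / (2 ^ n - 1) * B.toReal ^ m, ?_, ?_⟩
  · have : 0 < B.toReal := ENNReal.toReal_pos (Metric.measure_ball_pos volume _ one_pos).ne' hB
    have : (0 : ℝ) < m := by exact_mod_cast hm
    have : (0 : ℝ) < 2 ^ n - 1 := by linarith
    positivity
  intro x A δ hA hδ K _ hK f hf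
  calc _ ≤ ∫⁻ y in ⋃ p : ℕ × Fin m, dyadicPiece x δ p.1 p.2,
          ENNReal.ofReal (K y) * ∏ j, (‖f j (y j)‖₊ : ℝ≥0∞) :=
        lintegral_mono_set (subset_iUnion_dyadicPiece x hδ)
    _ ≤ ∑' p : ℕ × Fin m, ∫⁻ y in dyadicPiece x δ p.1 p.2,
          ENNReal.ofReal (K y) * ∏ j, (‖f j (y j)‖₊ : ℝ≥0∞) := lintegral_iUnion_le _ _
    _ ≤ ∑' p : ℕ × Fin m, ENNReal.ofReal (A * 2 ^ (m * n) * ((2 ^ n)⁻¹) ^ (p.1 + 1))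
          * B ^ m * ∏ j, hlMaximal (f j) x :=
        ENNReal.tsum_le_tsum fun p ↦ setLIntegral_dyadicPiece_le hδ hA.le hK f
          (fun j ↦ (hf j).aestronglyMeasurable) p.1 p.2
    _ = ENNReal.ofReal (m * (A * 2 ^ (m * n)) / (2 ^ n - 1)) * B ^ m * ∏ j, hlMaximal (f j) x := by
        rw [ENNReal.tsum_mul_right, ENNReal.tsum_mul_right,
          tsum_ofReal_mul_inv_pow_succ_prod_fin m (by positivity) h2n]
    _ = ENNReal.ofReal (m * 2 ^ (m * n) / (2 ^ n - 1) * B.toReal ^ m * A)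
          * ∏ j, hlMaximal (f j) x := by
        have hBm : B ^ m = ENNReal.ofReal (B.toReal ^ m) := by
          rw [ENNReal.ofReal_pow ENNReal.toReal_nonneg, ENNReal.ofReal_toReal hB]
        rw [hBm, ← ENNReal.ofReal_mul (by positivity)]
        congr 2
        ring
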